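/- arXiv:0806.3940 — 10 statements merged into one kernel-verified Lean document; each statement's English description precedes it below -/
import Mathlib

section
/- Let F1, F2 : ℂ → ℂ be functions such that F1² and F2² are linearly independent over ℂ (i.e. c1·F1(n)² + c2·F2(n)² = 0 for all n implies c1 = c2 = 0) and such that there exists n with F1(n)·F2(n) ≠ 0. Let a, b, c, d, α, β, γ, δ : ℤ × ℤ → ℂ and for each n define the 2×2 matrices L(l,m,n) = [[F1(n)·a(l,m), F2(n)·b(l,m)], [F2(n)·c(l,m), F1(n)·d(l,m)]] and M(l,m,n) = [[F2(n)·α(l,m), F1(n)·β(l,m)], [F1(n)·γ(l,m), F2(n)·δ(l,m)]]. Then the compatibility condition L(l,m+1,n)·M(l,m,n) = M(l+1,m,n)·L(l,m,n) holds for all (l,m,n) if and only if for all (l,m): (i) â·α + b̂·γ = a·ᾱ + c·β̄, (ii) d̂·δ + ĉ·β = d·δ̄ + b·γ̄, (iii) â·β = d·β̄, (iv) b̂·δ = b·ᾱ, (v) ĉ·α = c·δ̄, (vi) d̂·γ = a·γ̄. -/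
/-- compatibility of the LSG-type Lax pair (antisymmetric spectral
dependence) is equivalent to the lattice-term system. -/
theorem stmt0 (F1 F2 : ℂ → ℂ)
    (hind : ∀ c1 c2 : ℂ, (∀ n : ℂ, c1 * (F1 n) ^ 2 + c2 * (F2 n) ^ 2 = 0) → c1 = 0 ∧ c2 = 0)
    (hne : ∃ n : ℂ, F1 n * F2 n ≠ 0)
    (a b c d α β γ δ : ℤ × ℤ → ℂ)
    (L M : ℤ × ℤ → ℂ → Matrix (Fin 2) (Fin 2) ℂ)
    (hL : ∀ (l m : ℤ) (n : ℂ), L (l, m) n =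
      !![F1 n * a (l, m), F2 n * b (l, m); F2 n * c (l, m), F1 n * d (l, m)])
    (hM : ∀ (l m : ℤ) (n : ℂ), M (l, m) n =
      !![F2 n * α (l, m), F1 n * β (l, m); F1 n * γ (l, m), F2 n * δ (l, m)]) :
    (∀ (l m : ℤ) (n : ℂ), L (l, m + 1) n * M (l, m) n = M (l + 1, m) n * L (l, m) n) ↔
    (∀ l m : ℤ,
      a (l, m + 1) * α (l, m) + b (l, m + 1) * γ (l, m) =
        a (l, m) * α (l + 1, m) + c (l, m) * β (l + 1, m) ∧
      d (l, m + 1) * δ (l, m) + c (l, m + 1) * β (l, m) =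
        d (l, m) * δ (l + 1, m) + b (l, m) * γ (l + 1, m) ∧
      a (l, m + 1) * β (l, m) = d (l, m) * β (l + 1, m) ∧
      b (l, m + 1) * δ (l, m) = b (l, m) * α (l + 1, m) ∧
      c (l, m + 1) * α (l, m) = c (l, m) * δ (l + 1, m) ∧
      d (l, m + 1) * γ (l, m) = a (l, m) * γ (l + 1, m)) := by
  constructor
  · intro h l m
    have key : ∀ n : ℂ,
        (F1 n * a (l, m+1) * (F2 n * α (l, m)) + F2 n * b (l, m+1) * (F1 n * γ (l, m)) =
          F2 n * α (l+1, m) * (F1 n * a (l, m)) + F1 n * β (l+1, m) * (F2 n * c (l, m))) ∧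
        (F1 n * a (l, m+1) * (F1 n * β (l, m)) + F2 n * b (l, m+1) * (F2 n * δ (l, m)) =
          F2 n * α (l+1, m) * (F2 n * b (l, m)) + F1 n * β (l+1, m) * (F1 n * d (l, m))) ∧
        (F2 n * c (l, m+1) * (F2 n * α (l, m)) + F1 n * d (l, m+1) * (F1 n * γ (l, m)) =
          F1 n * γ (l+1, m) * (F1 n * a (l, m)) + F2 n * δ (l+1, m) * (F2 n * c (l, m))) ∧
        (F2 n * c (l, m+1) * (F1 n * β (l, m)) + F1 n * d (l, m+1) * (F2 n * δ (l, m)) =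
          F1 n * γ (l+1, m) * (F2 n * b (l, m)) + F2 n * δ (l+1, m) * (F1 n * d (l, m))) := by
      intro n
      have e := h l m n
      rw [hL, hL, hM, hM, Matrix.mul_fin_two, Matrix.mul_fin_two] at e
      have e00 := congrFun (congrFun e 0) 0
      have e01 := congrFun (congrFun e 0) 1
      have e10 := congrFun (congrFun e 1) 0
      have e11 := congrFun (congrFun e 1) 1
      simp only [Matrix.of_apply, Matrix.cons_val', Matrix.cons_val_zero, Matrix.cons_val_one,
        Matrix.head_cons, Matrix.empty_val', Matrix.cons_val_fin_one, Matrix.head_fin_const] at e00 e01 e10 e11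
      exact ⟨e00, e01, e10, e11⟩
    obtain ⟨n0, hn0⟩ := hne
    have hcancel : ∀ x y : ℂ, F1 n0 * F2 n0 * x = F1 n0 * F2 n0 * y → x = y := fun x y hxy =>
      mul_left_cancel₀ hn0 hxy
    have h1 : a (l, m + 1) * α (l, m) + b (l, m + 1) * γ (l, m) =
        a (l, m) * α (l + 1, m) + c (l, m) * β (l + 1, m) := by
      apply hcancel
      have := (key n0).1
      ring_nf at this ⊢
      linear_combination this
    have h2 : d (l, m + 1) * δ (l, m) + c (l, m + 1) * β (l, m) =
        d (l, m) * δ (l + 1, m) + b (l, m) * γ (l + 1, m) := by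
      apply hcancel
      have := (key n0).2.2.2
      ring_nf at this ⊢
      linear_combination this
    have h34 := hind (a (l, m+1) * β (l, m) - d (l, m) * β (l+1, m))
      (b (l, m+1) * δ (l, m) - b (l, m) * α (l+1, m)) (fun n => by
        have := (key n).2.1
        linear_combination this)
    have h56 := hind (d (l, m+1) * γ (l, m) - a (l, m) * γ (l+1, m))
      (c (l, m+1) * α (l, m) - c (l, m) * δ (l+1, m)) (fun n => by
        have := (key n).2.2.1
        linear_combination this)
    refine ⟨h1, h2, by linear_combination h34.1, by linear_combination h34.2,
      by linear_combination h56.2, by linear_combination h56.1⟩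
  · intro h l m n
    obtain ⟨h1, h2, h3, h4, h5, h6⟩ := h l m
    rw [hL, hL, hM, hM, Matrix.mul_fin_two, Matrix.mul_fin_two]
    ext i j
    fin_cases i <;> fin_cases j <;> simp
    · linear_combination (F1 n * F2 n) * h1
    · linear_combination (F1 n)^2 * h3 + (F2 n)^2 * h4
    · linear_combination (F1 n)^2 * h6 + (F2 n)^2 * h5
    · linear_combination (F1 n * F2 n) * h2
end

section
/- Let F1, F2 : ℂ → ℂ be functions such that F1² and F2² are linearly independent over ℂ and such that there exists n with F1(n)·F2(n) ≠ 0. Let a, b, c, d, α, β, γ, δ : ℤ × ℤ → ℂ and for each n define L(l,m,n) = [[F1(n)·a(l,m), F2(n)·b(l,m)], [F2(n)·c(l,m), F1(n)·d(l,m)]] and M(l,m,n) = [[F1(n)·α(l,m), F2(n)·β(l,m)], [F2(n)·γ(l,m), F1(n)·δ(l,m)]]. Then the compatibility condition L(l,m+1,n)·M(l,m,n) = M(l+1,m,n)·L(l,m,n) holds for all (l,m,n) if and only if for all (l,m): (i) â·α = a·ᾱ, (ii) b̂·γ = c·β̄, (iii) d̂·δ = d·δ̄, (iv) ĉ·β =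 b·γ̄, (v) â·β + b̂·δ = b·ᾱ + d·β̄, (vi) ĉ·α + d̂·γ = a·γ̄ + c·δ̄. -/
/-- compatibility of the LMKdV-type Lax pair (same spectral
dependence in both matrices) is equivalent to the lattice-term system. -/
theorem stmt1 (F1 F2 : ℂ → ℂ)
    (hind : ∀ c1 c2 : ℂ, (∀ n : ℂ, c1 * (F1 n) ^ 2 + c2 * (F2 n) ^ 2 = 0) → c1 = 0 ∧ c2 = 0)
    (hne : ∃ n : ℂ, F1 n * F2 n ≠ 0)
    (a b c d α β γ δ : ℤ × ℤ → ℂ)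
    (L M : ℤ × ℤ → ℂ → Matrix (Fin 2) (Fin 2) ℂ)
    (hL : ∀ (l m : ℤ) (n : ℂ), L (l, m) n =
      !![F1 n * a (l, m), F2 n * b (l, m); F2 n * c (l, m), F1 n * d (l, m)])
    (hM : ∀ (l m : ℤ) (n : ℂ), M (l, m) n =
      !![F1 n * α (l, m), F2 n * β (l, m); F2 n * γ (l, m), F1 n * δ (l, m)]) :
    (∀ (l m : ℤ) (n : ℂ), L (l, m + 1) n * M (l, m) n = M (l + 1, m) n * L (l, m) n) ↔
    (∀ l m : ℤ,
      a (l, m + 1) * α (l, m) = a (l, m) * α (l + 1, m) ∧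
      b (l, m + 1) * γ (l, m) = c (l, m) * β (l + 1, m) ∧
      d (l, m + 1) * δ (l, m) = d (l, m) * δ (l + 1, m) ∧
      c (l, m + 1) * β (l, m) = b (l, m) * γ (l + 1, m) ∧
      a (l, m + 1) * β (l, m) + b (l, m + 1) * δ (l, m) =
        b (l, m) * α (l + 1, m) + d (l, m) * β (l + 1, m) ∧
      c (l, m + 1) * α (l, m) + d (l, m + 1) * γ (l, m) =
        a (l, m) * γ (l + 1, m) + c (l, m) * δ (l + 1, m)) := by
  constructor
  · intro h l m
    have key : ∀ n : ℂ,
        (F1 n * a (l, m+1) * (F1 n * α (l, m)) + F2 n * b (l, m+1) * (F2 n * γ (l, m)) =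
          F1 n * α (l+1, m) * (F1 n * a (l, m)) + F2 n * β (l+1, m) * (F2 n * c (l, m))) ∧
        (F1 n * a (l, m+1) * (F2 n * β (l, m)) + F2 n * b (l, m+1) * (F1 n * δ (l, m)) =
          F1 n * α (l+1, m) * (F2 n * b (l, m)) + F2 n * β (l+1, m) * (F1 n * d (l, m))) ∧
        (F2 n * c (l, m+1) * (F1 n * α (l, m)) + F1 n * d (l, m+1) * (F2 n * γ (l, m)) =
          F2 n * γ (l+1, m) * (F1 n * a (l, m)) + F1 n * δ (l+1, m) * (F2 n * c (l, m))) ∧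
        (F2 n * c (l, m+1) * (F2 n * β (l, m)) + F1 n * d (l, m+1) * (F1 n * δ (l, m)) =
          F2 n * γ (l+1, m) * (F2 n * b (l, m)) + F1 n * δ (l+1, m) * (F1 n * d (l, m))) := by
      intro n
      have := h l m n
      rw [hL, hM, hL, hM] at this
      rw [Matrix.mul_fin_two, Matrix.mul_fin_two] at this
      refine ⟨?_, ?_, ?_, ?_⟩
      · simpa using congrFun (congrFun this 0) 0
      · simpa using congrFun (congrFun this 0) 1
      · simpa using congrFun (congrFun this 1) 0
      · simpa using congrFun (congrFun this 1) 1
    have h1 := hind (a (l, m+1) * α (l, m) - a (l, m) * α (l+1, m))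
      (b (l, m+1) * γ (l, m) - c (l, m) * β (l+1, m)) (fun n => by
        have := (key n).1; ring_nf; ring_nf at this; linear_combination this)
    have h2 := hind (d (l, m+1) * δ (l, m) - d (l, m) * δ (l+1, m))
      (c (l, m+1) * β (l, m) - b (l, m) * γ (l+1, m)) (fun n => by
        have := (key n).2.2.2; ring_nf; ring_nf at this; linear_combination this)
    obtain ⟨n0, hn0⟩ := hne
    have e01 := (key n0).2.1
    have e10 := (key n0).2.2.1
    refine ⟨sub_eq_zero.mp h1.1, ?_, ?_, ?_, ?_, ?_⟩
    · exact sub_eq_zero.mp h1.2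
    · exact sub_eq_zero.mp h2.1
    · exact sub_eq_zero.mp h2.2
    · have : F1 n0 * F2 n0 * (a (l, m+1) * β (l, m) + b (l, m+1) * δ (l, m)) =
          F1 n0 * F2 n0 * (b (l, m) * α (l+1, m) + d (l, m) * β (l+1, m)) := by
        linear_combination e01
      exact mul_left_cancel₀ hn0 this
    · have : F1 n0 * F2 n0 * (c (l, m+1) * α (l, m) + d (l, m+1) * γ (l, m)) =
          F1 n0 * F2 n0 * (a (l, m) * γ (l+1, m) + c (l, m) * δ (l+1, m)) := by
        linear_combination e10
      exact mul_left_cancel₀ hn0 this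
  · intro h l m n
    obtain ⟨e1, e2, e3, e4, e5, e6⟩ := h l m
    rw [hL, hM, hL, hM, Matrix.mul_fin_two, Matrix.mul_fin_two]
    ext i j
    fin_cases i <;> fin_cases j <;> simp <;>
      [linear_combination (F1 n)^2 * e1 + (F2 n)^2 * e2;
       linear_combination F1 n * F2 n * e5;
       linear_combination F1 n * F2 n * e6;
       linear_combination (F2 n)^2 * e4 + (F1 n)^2 * e3]
end

section
/- Let k1, k2, k3, k4 be nonzero complex numbers and let φ, ψ : ℤ × ℤ → ℂ. Then k1·φ̂(l,m) − k2·φ(l,m) = k3·ψ̄(l,m) − k4·ψ(l,m) holds for all (l,m) ∈ ℤ² if and only if there exist v : ℤ × ℤ → ℂ, λ : ℤ → ℂ and μ : ℤ → ℂ such that for all (l,m): φ(l,m) = k3·v(l+1,m) − k4·v(l,m) + λ(l)·(k2/k1)^m and ψ(l,m) = k1·v(l,m+1) − k2·v(l,m) + μ(m)·(k4/k3)^l, where the powers are integer powers of the nonzero complex numbers k2/k1 and k4/k3. -/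
private noncomputable def upSeq (a : ℂ) (b : ℤ → ℂ) : ℕ → ℂ
  | 0 => 0
  | (k+1) => a * upSeq a b k + b k

private noncomputable def downSeq (a : ℂ) (b : ℤ → ℂ) : ℕ → ℂ
  | 0 => 0
  | (k+1) => (downSeq a b k - b (-(k+1))) / a

private lemma exists_rec (a : ℂ) (ha : a ≠ 0) (b : ℤ → ℂ) :
    ∃ V : ℤ → ℂ, ∀ m : ℤ, V (m + 1) = a * V m + b m := by
  set V : ℤ → ℂ := fun n => if 0 ≤ n then upSeq a b n.toNat else downSeq a b (-n).toNat with hVdef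
  have hVpos : ∀ k : ℕ, V (k : ℤ) = upSeq a b k := by
    intro k; simp [hVdef]
  have hmid : ∀ k : ℕ, V (-(k:ℤ)) = downSeq a b k := by
    intro k
    rcases Nat.eq_zero_or_pos k with rfl | hk
    · simp [hVdef, upSeq, downSeq]
    · have hA : ¬ (0:ℤ) ≤ -(k:ℤ) := by omega
      have hB : (-(-(k:ℤ))).toNat = k := by omega
      simp only [hVdef, hA, if_false, hB]
  have hneg : ∀ k : ℕ, V (-((k:ℤ)+1)) = downSeq a b (k+1) := by
    intro k
    have hA : ¬ (0:ℤ) ≤ -((k:ℤ)+1) := by omega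
    have hB : (-(-((k:ℤ)+1))).toNat = k+1 := by omega
    simp only [hVdef, hA, if_false, hB]
  refine ⟨V, fun m => ?_⟩
  rcases le_or_gt 0 m with hm | hm
  · obtain ⟨k, rfl⟩ : ∃ k : ℕ, m = (k:ℤ) := ⟨m.toNat, by omega⟩
    rw [show (k:ℤ)+1 = ((k+1:ℕ):ℤ) by push_cast; ring, hVpos, hVpos, upSeq]
  · obtain ⟨k, rfl⟩ : ∃ k : ℕ, m = -((k:ℤ)+1) := ⟨(-m).toNat - 1, by omega⟩
    rw [show -((k:ℤ)+1)+1 = -(k:ℤ) by ring, hmid, hneg, downSeq]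
    field_simp
    ring

/-- additive integration of the linear lattice equation
`k1·φ̂ − k2·φ = k3·ψ̄ − k4·ψ`. -/
theorem stmt2 (k1 k2 k3 k4 : ℂ) (h1 : k1 ≠ 0) (h2 : k2 ≠ 0) (h3 : k3 ≠ 0) (h4 : k4 ≠ 0)
    (φ ψ : ℤ × ℤ → ℂ) :
    (∀ l m : ℤ, k1 * φ (l, m + 1) - k2 * φ (l, m) = k3 * ψ (l + 1, m) - k4 * ψ (l, m)) ↔
    (∃ (v : ℤ × ℤ → ℂ) (lam : ℤ → ℂ) (mu : ℤ → ℂ), ∀ l m : ℤ,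
      φ (l, m) = k3 * v (l + 1, m) - k4 * v (l, m) + lam l * (k2 / k1) ^ m ∧
      ψ (l, m) = k1 * v (l, m + 1) - k2 * v (l, m) + mu m * (k4 / k3) ^ l) := by
  have hc : k2 / k1 ≠ 0 := div_ne_zero h2 h1
  have hd : k4 / k3 ≠ 0 := div_ne_zero h4 h3
  have e1 : k1 * (k2 / k1) = k2 := by field_simp
  have e2 : k3 * (k4 / k3) = k4 := by field_simp
  constructor
  · intro hE
    choose V hV using fun l : ℤ => exists_rec (k2/k1) hc (fun m => ψ (l, m) / k1)
    have hψ : ∀ l m : ℤ, ψ (l, m) = k1 * V l (m + 1) - k2 * V l m := by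
      intro l m
      have h := hV l m
      field_simp at h
      linear_combination -h
    refine ⟨fun p => V p.1 p.2,
      fun l => φ (l, 0) - (k3 * V (l+1) 0 - k4 * V l 0), fun _ => 0, fun l m => ?_⟩
    refine ⟨?_, by rw [hψ]; ring⟩
    induction m using Int.induction_on with
    | zero => simp only [zpow_zero]; ring
    | succ n ih =>
        have e := hE l n
        rw [hψ, hψ] at e
        rw [zpow_add_one₀ hc]
        refine mul_left_cancel₀ h1 ?_
        linear_combination e + k2 * ih -
          ((φ (l, 0) - (k3 * V (l+1) 0 - k4 * V l 0)) * (k2/k1) ^ (n:ℤ)) * e1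
    | pred n ih =>
        have e := hE l (-(n:ℤ) - 1)
        rw [hψ, hψ] at e
        rw [show -(n:ℤ) - 1 + 1 = -(n:ℤ) by ring] at e
        have hz : ((k2/k1) ^ (-(n:ℤ)) : ℂ) = (k2/k1) ^ (-(n:ℤ)-1) * (k2/k1) := by
          rw [← zpow_add_one₀ hc]; norm_num
        rw [hz] at ih
        refine mul_left_cancel₀ h2 ?_
        linear_combination -e + k1 * ih +
          ((φ (l, 0) - (k3 * V (l+1) 0 - k4 * V l 0)) * (k2/k1) ^ (-(n:ℤ)-1)) * e1
  · rintro ⟨v, lam, mu, hv⟩ l m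
    have A1 := (hv l m).1
    have A2 := (hv l (m+1)).1
    have B1 := (hv l m).2
    have B2 := (hv (l+1) m).2
    rw [zpow_add_one₀ hc] at A2
    rw [zpow_add_one₀ hd] at B2
    linear_combination k1 * A2 - k2 * A1 - k3 * B2 + k4 * B1 +
      (lam l * (k2/k1) ^ m) * e1 - (mu m * (k4/k3) ^ l) * e2
end

section
/- Let φ, ψ : ℤ × ℤ → ℂˣ be functions with nonzero complex values. Then φ̂(l,m)/φ(l,m) = ψ̄(l,m)/ψ(l,m) holds for all (l,m) ∈ ℤ² if and only if there exist v : ℤ × ℤ → ℂˣ, λ : ℤ → ℂˣ and μ : ℤ → ℂˣ such that for all (l,m): φ(l,m) = λ(l)·v(l+1,m)/v(l,m) and ψ(l,m) = μ(m)·v(l,m+1)/v(l,m). -/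
/-- Multiplicative antiderivative of `h` on `ℤ`, normalized to `1` at `0`. -/
noncomputable def prodInt (h : ℤ → ℂˣ) (l : ℤ) : ℂˣ :=
  (∏ i ∈ Finset.range l.toNat, h i) * (∏ i ∈ Finset.range (-l).toNat, h (-(i:ℤ) - 1))⁻¹

lemma prodInt_zero (h : ℤ → ℂˣ) : prodInt h 0 = 1 := by
  simp [prodInt]

lemma prodInt_succ (h : ℤ → ℂˣ) (l : ℤ) : prodInt h (l + 1) = prodInt h l * h l := by
  rcases le_or_gt 0 l with hl | hl
  · have h1 : (l + 1).toNat = l.toNat + 1 := by omega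
    have h2 : (-l).toNat = 0 := by omega
    have h3 : (-(l + 1)).toNat = 0 := by omega
    have h4 : (l.toNat : ℤ) = l := Int.toNat_of_nonneg hl
    simp only [prodInt]
    rw [h1, h2, h3, Finset.prod_range_succ, h4]
    simp
  · have h1 : (l + 1).toNat = 0 := by omega
    have h2 : l.toNat = 0 := by omega
    have h3 : (-l).toNat = (-(l + 1)).toNat + 1 := by omega
    have h4 : (-((-(l + 1)).toNat : ℤ) - 1) = l := by omega
    rw [show prodInt h (l+1) = (∏ i ∈ Finset.range (l+1).toNat, h i) *
        (∏ i ∈ Finset.range (-(l+1)).toNat, h (-(i:ℤ) - 1))⁻¹ from rfl]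
    rw [prodInt, h1, h2, h3, Finset.prod_range_succ, h4]
    simp [mul_inv, div_eq_mul_inv, mul_comm, mul_left_comm, mul_assoc]

/-- Two functions on `ℤ` agreeing at `0` with the same multiplicative increments agree. -/
lemma eq_of_step (F G : ℤ → ℂˣ) (h0 : F 0 = G 0)
    (hstep : ∀ l : ℤ, F (l + 1) / F l = G (l + 1) / G l) : ∀ l, F l = G l := by
  intro l
  induction l using Int.induction_on with
  | zero => exact h0
  | succ k ih =>
      have := hstep k
      rw [div_eq_div_iff_mul_eq_mul] at this
      rw [ih] at this
      exact mul_right_cancel this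
  | pred k ih =>
      have h' := hstep (-(k:ℤ) - 1)
      rw [div_eq_div_iff_mul_eq_mul] at h'
      have he : -(k:ℤ) - 1 + 1 = -(k:ℤ) := by ring
      rw [he, ih] at h'
      exact (mul_left_cancel h').symm

/-- multiplicative integration of `φ̂/φ = ψ̄/ψ` on the lattice. -/
theorem stmt3 (φ ψ : ℤ × ℤ → ℂˣ) :
    (∀ l m : ℤ, φ (l, m + 1) / φ (l, m) = ψ (l + 1, m) / ψ (l, m)) ↔
    (∃ (v : ℤ × ℤ → ℂˣ) (lam : ℤ → ℂˣ) (mu : ℤ → ℂˣ), ∀ l m : ℤ,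
      φ (l, m) = lam l * v (l + 1, m) / v (l, m) ∧
      ψ (l, m) = mu m * v (l, m + 1) / v (l, m)) := by
  constructor
  · intro H
    refine ⟨fun p => prodInt (fun i => φ (i, p.2) / φ (i, 0)) p.1,
      fun l => φ (l, 0), fun m => ψ (0, m), fun l m => ⟨?_, ?_⟩⟩
    · simp only [prodInt_succ]
      simp [mul_inv, div_eq_mul_inv, mul_comm, mul_left_comm, mul_assoc]
    · -- need : ψ (l,m) = ψ (0,m) * v(l,m+1) / v(l,m)
      have key : ∀ l : ℤ,
          prodInt (fun i => φ (i, m + 1) / φ (i, 0)) l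
            / prodInt (fun i => φ (i, m) / φ (i, 0)) l = ψ (l, m) / ψ (0, m) := by
        intro l
        refine eq_of_step
          (fun l => prodInt (fun i => φ (i, m + 1) / φ (i, 0)) l
            / prodInt (fun i => φ (i, m) / φ (i, 0)) l)
          (fun l => ψ (l, m) / ψ (0, m)) (by simp [prodInt_zero]) (fun l => ?_) l
        simp only [prodInt_succ]
        have h1 := H l m
        rw [div_eq_div_iff_mul_eq_mul] at h1 ⊢
        calc prodInt (fun i => φ (i, m + 1) / φ (i, 0)) l * (φ (l, m + 1) / φ (l, 0))
              / (prodInt (fun i => φ (i, m) / φ (i, 0)) l * (φ (l, m) / φ (l, 0)))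
              * (ψ (l, m) / ψ (0, m))
            = (prodInt (fun i => φ (i, m + 1) / φ (i, 0)) l
                / prodInt (fun i => φ (i, m) / φ (i, 0)) l * (ψ (l, m) / ψ (0, m)))
              * (φ (l, m + 1) / φ (l, m)) := by
                simp [mul_inv, div_eq_mul_inv, mul_comm, mul_left_comm, mul_assoc]
          _ = (prodInt (fun i => φ (i, m + 1) / φ (i, 0)) l
                / prodInt (fun i => φ (i, m) / φ (i, 0)) l * (ψ (l, m) / ψ (0, m)))
              * (ψ (l + 1, m) / ψ (l, m)) := by rw [H l m]
          _ = ψ (l + 1, m) / ψ (0, m)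
              * (prodInt (fun i => φ (i, m + 1) / φ (i, 0)) l
                / prodInt (fun i => φ (i, m) / φ (i, 0)) l) := by
                simp [mul_inv, div_eq_mul_inv, mul_comm, mul_left_comm, mul_assoc]
      have k := key l
      rw [div_eq_div_iff_mul_eq_mul] at k
      rw [eq_comm, div_eq_iff_eq_mul, mul_comm (ψ (0, m)), k]
  · rintro ⟨v, lam, mu, hv⟩ l m
    obtain ⟨hφ1, hψ1⟩ := hv l m
    obtain ⟨hφ2, -⟩ := hv l (m + 1)
    obtain ⟨-, hψ2⟩ := hv (l + 1) m
    rw [hφ1, hφ2, hψ1, hψ2]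
    simp [mul_inv, div_eq_mul_inv, mul_comm, mul_left_comm, mul_assoc]
end

section
/- Let a, d, β, γ : ℤ × ℤ → ℂˣ. Then the two equations â·β = d·β̄ and d̂·γ = a·γ̄ hold for all (l,m) ∈ ℤ² if and only if there exist λ0, λ3 : ℤ → ℂˣ, μ1, μ2 : ℤ → ℂˣ and v1, v2 : ℤ × ℤ → ℂˣ such that, with ρ(l,m) = λ3(l)^((−1)^m), for all (l,m): a = (λ0(l)/ρ)·v̄1/v1, d = λ0(l)·ρ·v̄2/v2, β = μ1(m)·v̂1/v2 and γ = μ2(m)·v̂2/v1. -/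
/-- `ρ(l,m) = λ3(l)^((−1)^m)`. -/
noncomputable def rho (lam3 : ℤ → ℂˣ) (l m : ℤ) : ℂˣ :=
  lam3 l ^ ((((-1 : ℤˣ) ^ m) : ℤˣ) : ℤ)

lemma rho_zero (lam3 : ℤ → ℂˣ) (l : ℤ) : rho lam3 l 0 = lam3 l := by
  simp [rho]

lemma rho_succ (lam3 : ℤ → ℂˣ) (l m : ℤ) :
    rho lam3 l (m + 1) = (rho lam3 l m)⁻¹ := by
  have h : ((-1 : ℤˣ) ^ (m + 1)) = -((-1 : ℤˣ) ^ m) := by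
    rw [zpow_add_one]; simp
  simp [rho, h, ← zpow_neg]

section aux
variable (β γ : ℤ × ℤ → ℂˣ)

/-- `Wpos n = (v1(·,n), v2(·,n))` for `n ≥ 0`. -/
noncomputable def Wpos : ℕ → ((ℤ → ℂˣ) × (ℤ → ℂˣ))
  | 0 => (fun _ => 1, fun _ => 1)
  | n + 1 => (fun l => β (l, (n : ℤ)) * (Wpos n).2 l,
              fun l => γ (l, (n : ℤ)) * (Wpos n).1 l)

/-- `Wneg n = (v1(·,-n), v2(·,-n))`. -/
noncomputable def Wneg : ℕ → ((ℤ → ℂˣ) × (ℤ → ℂˣ))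
  | 0 => (fun _ => 1, fun _ => 1)
  | n + 1 => (fun l => (Wneg n).2 l / γ (l, -(n + 1 : ℤ)),
              fun l => (Wneg n).1 l / β (l, -(n + 1 : ℤ)))

noncomputable def W : ℤ → ((ℤ → ℂˣ) × (ℤ → ℂˣ))
  | Int.ofNat n => Wpos β γ n
  | Int.negSucc n => Wneg β γ (n + 1)

lemma W_neg (n : ℕ) : W β γ (-(n : ℤ)) = Wneg β γ n := by
  cases n with
  | zero => simp [W, Wpos, Wneg]
  | succ k =>
    have : (-(((k : ℤ) + 1))) = Int.negSucc k := by
      simp [Int.negSucc_eq]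
    show W β γ (-((k : ℕ) + 1 : ℤ)) = Wneg β γ (k + 1)
    rw [show ((k : ℕ) + 1 : ℤ) = ((k : ℤ) + 1) by ring, this]
    rfl

lemma W_zero : W β γ 0 = (fun _ => 1, fun _ => 1) := rfl

lemma W_step (m l : ℤ) :
    (W β γ (m + 1)).1 l = β (l, m) * (W β γ m).2 l ∧
    (W β γ (m + 1)).2 l = γ (l, m) * (W β γ m).1 l := by
  cases m with
  | ofNat n =>
    have h1 : (Int.ofNat n + 1) = Int.ofNat (n + 1) := by simp
    rw [h1]
    show (Wpos β γ (n + 1)).1 l = _ ∧ (Wpos β γ (n + 1)).2 l = _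
    constructor <;> rfl
  | negSucc n =>
    have h1 : (Int.negSucc n + 1) = -(n : ℤ) := by
      simp [Int.negSucc_eq]
    have h2 : (Int.negSucc n : ℤ) = -((n : ℤ) + 1) := by simp [Int.negSucc_eq]
    rw [h1, W_neg]
    show (Wneg β γ n).1 l = β (l, Int.negSucc n) * (W β γ (Int.negSucc n)).2 l ∧
      (Wneg β γ n).2 l = γ (l, Int.negSucc n) * (W β γ (Int.negSucc n)).1 l
    have h3 : W β γ (Int.negSucc n) = Wneg β γ (n + 1) := rfl
    rw [h3]
    constructor
    · show (Wneg β γ n).1 l = β (l, Int.negSucc n) *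
        ((Wneg β γ n).1 l / β (l, -((n : ℤ) + 1)))
      rw [h2]
      exact (mul_div_cancel _ _).symm
    · show (Wneg β γ n).2 l = γ (l, Int.negSucc n) *
        ((Wneg β γ n).2 l / γ (l, -((n : ℤ) + 1)))
      rw [h2]
      exact (mul_div_cancel _ _).symm

end aux

lemma exists_sqrt_unit (u : ℂˣ) : ∃ z : ℂˣ, z ^ 2 = u := by
  obtain ⟨z, hz⟩ := IsAlgClosed.exists_pow_nat_eq (u : ℂ) (n := 2) (by norm_num)
  have hz0 : z ≠ 0 := by
    intro h; rw [h] at hz; simp at hz; exact u.ne_zero hz.symm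
  exact ⟨Units.mk0 z hz0, by ext; simpa using hz⟩

set_option maxHeartbeats 1600000 in
/-- multiplicative integration of the pair `â·β = d·β̄`,
`d̂·γ = a·γ̄`. -/
theorem stmt4 (a d β γ : ℤ × ℤ → ℂˣ) :
    (∀ l m : ℤ,
      a (l, m + 1) * β (l, m) = d (l, m) * β (l + 1, m) ∧
      d (l, m + 1) * γ (l, m) = a (l, m) * γ (l + 1, m)) ↔
    (∃ (lam0 lam3 : ℤ → ℂˣ) (μ1 μ2 : ℤ → ℂˣ) (v1 v2 : ℤ × ℤ → ℂˣ), ∀ l m : ℤ,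
      a (l, m) = lam0 l / rho lam3 l m * (v1 (l + 1, m) / v1 (l, m)) ∧
      d (l, m) = lam0 l * rho lam3 l m * (v2 (l + 1, m) / v2 (l, m)) ∧
      β (l, m) = μ1 m * (v1 (l, m + 1) / v2 (l, m)) ∧
      γ (l, m) = μ2 m * (v2 (l, m + 1) / v1 (l, m))) := by
  constructor
  · intro h
    choose lam3 hlam3 using fun l => exists_sqrt_unit (d (l, 0) / a (l, 0))
    set lam0 : ℤ → ℂˣ := fun l => lam3 l * a (l, 0) with hlam0
    set v1 : ℤ × ℤ → ℂˣ := fun p => (W β γ p.2).1 p.1 with hv1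
    set v2 : ℤ × ℤ → ℂˣ := fun p => (W β γ p.2).2 p.1 with hv2
    refine ⟨lam0, lam3, fun _ => 1, fun _ => 1, v1, v2, ?_⟩
    have hβ : ∀ l m : ℤ, β (l, m) = (1 : ℂˣ) * (v1 (l, m + 1) / v2 (l, m)) := by
      intro l m
      have := (W_step β γ m l).1
      rw [one_mul, eq_div_iff_mul_eq', hv1, hv2]
      exact this.symm
    have hγ : ∀ l m : ℤ, γ (l, m) = (1 : ℂˣ) * (v2 (l, m + 1) / v1 (l, m)) := by
      intro l m
      have := (W_step β γ m l).2
      rw [one_mul, eq_div_iff_mul_eq', hv1, hv2]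
      exact this.symm
    -- the a, d equations by induction on m
    have key : ∀ m : ℤ, ∀ l : ℤ,
        a (l, m) = lam0 l / rho lam3 l m * (v1 (l + 1, m) / v1 (l, m)) ∧
        d (l, m) = lam0 l * rho lam3 l m * (v2 (l + 1, m) / v2 (l, m)) := by
      intro m
      induction m using Int.induction_on with
      | zero =>
        intro l
        have h1 : v1 (l + 1, 0) = 1 := rfl
        have h2 : v1 (l, 0) = 1 := rfl
        have h3 : v2 (l + 1, 0) = 1 := rfl
        have h4 : v2 (l, 0) = 1 := rfl
        have hsq := hlam3 l
        rw [h1, h2, h3, h4, rho_zero, hlam0]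
        constructor
        · simp
        · rw [div_one, mul_one]
          calc d (l, 0) = d (l, 0) / a (l, 0) * a (l, 0) := by simp
            _ = lam3 l ^ 2 * a (l, 0) := by rw [hsq]
            _ = lam3 l * a (l, 0) * lam3 l := by rw [sq, mul_right_comm]
      | succ k ih =>
        intro l
        -- from row k to row k+1
        have h1 := (h l k).1
        have h2 := (h l k).2
        have hA : a (l, (k : ℤ) + 1) = d (l, k) * β (l + 1, k) / β (l, k) :=
          eq_div_of_mul_eq' h1
        have hD : d (l, (k : ℤ) + 1) = a (l, k) * γ (l + 1, k) / γ (l, k) :=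
          eq_div_of_mul_eq' h2
        have ia := (ih l).1
        have id := (ih l).2
        have s1 := hβ l k
        have s2 := hβ (l + 1) k
        have s3 := hγ l k
        have s4 := hγ (l + 1) k
        rw [one_mul] at s1 s2 s3 s4
        constructor
        · rw [hA, id, s1, s2, rho_succ]
          rw [Units.ext_iff]
          simp only [Units.val_mul, Units.val_div_eq_div_val,
            Units.val_inv_eq_inv_val]
          field_simp
        · rw [hD, ia, s3, s4, rho_succ]
          rw [Units.ext_iff]
          simp only [Units.val_mul, Units.val_div_eq_div_val,
            Units.val_inv_eq_inv_val]
          field_simp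
      | pred k ih =>
        intro l
        -- from row -k to row -k-1 : use the PDE at m = -k-1
        have h1 := (h l (-(k : ℤ) - 1)).1
        have h2 := (h l (-(k : ℤ) - 1)).2
        rw [show (-(k : ℤ) - 1 + 1) = -(k : ℤ) by ring] at h1 h2
        -- h1 : a (l, -k) * β (l, -k-1) = d (l, -k-1) * β (l+1, -k-1)
        -- h2 : d (l, -k) * γ (l, -k-1) = a (l, -k-1) * γ (l+1, -k-1)
        have hD : d (l, -(k : ℤ) - 1) = a (l, -(k : ℤ)) * β (l, -(k : ℤ) - 1)
            / β (l + 1, -(k : ℤ) - 1) := (eq_div_of_mul_eq' h1.symm)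
        have hA : a (l, -(k : ℤ) - 1) = d (l, -(k : ℤ)) * γ (l, -(k : ℤ) - 1)
            / γ (l + 1, -(k : ℤ) - 1) := (eq_div_of_mul_eq' h2.symm)
        have ia := (ih l).1
        have id := (ih l).2
        have s1 := hβ l (-(k : ℤ) - 1)
        have s2 := hβ (l + 1) (-(k : ℤ) - 1)
        have s3 := hγ l (-(k : ℤ) - 1)
        have s4 := hγ (l + 1) (-(k : ℤ) - 1)
        rw [one_mul, show (-(k : ℤ) - 1 + 1) = -(k : ℤ) by ring] at s1 s2 s3 s4
        have hrho : rho lam3 l (-(k : ℤ)) = (rho lam3 l (-(k : ℤ) - 1))⁻¹ := by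
          have := rho_succ lam3 l (-(k : ℤ) - 1)
          rw [show (-(k : ℤ) - 1 + 1) = -(k : ℤ) by ring] at this
          exact this
        rw [hrho] at ia id
        constructor
        · rw [hA, id, s3, s4]
          rw [Units.ext_iff]
          simp only [Units.val_mul, Units.val_div_eq_div_val,
            Units.val_inv_eq_inv_val]
          field_simp
        · rw [hD, ia, s1, s2]
          rw [Units.ext_iff]
          simp only [Units.val_mul, Units.val_div_eq_div_val,
            Units.val_inv_eq_inv_val]
          field_simp
    intro l m
    exact ⟨(key m l).1, (key m l).2, hβ l m, hγ l m⟩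
  · rintro ⟨lam0, lam3, μ1, μ2, v1, v2, hrep⟩ l m
    obtain ⟨ha1, hd1, hb1, hg1⟩ := hrep l (m + 1)
    obtain ⟨ha0, hd0, hb0, hg0⟩ := hrep l m
    obtain ⟨ha0', hd0', hb0', hg0'⟩ := hrep (l + 1) m
    constructor
    · rw [ha1, hd0, hb0, hb0', rho_succ]
      rw [Units.ext_iff]
      simp only [Units.val_mul, Units.val_div_eq_div_val,
        Units.val_inv_eq_inv_val]
      field_simp
    · rw [hd1, ha0, hg0, hg0', rho_succ]
      rw [Units.ext_iff]
      simp only [Units.val_mul, Units.val_div_eq_div_val,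
        Units.val_inv_eq_inv_val]
      field_simp
end

section
/- Let b, c, α, δ : ℤ × ℤ → ℂˣ. Then the two equations b̂·δ = b·ᾱ and ĉ·α = c·δ̄ hold for all (l,m) ∈ ℤ² if and only if there exist μ0, μ3 : ℤ → ℂˣ, λ1, λ2 : ℤ → ℂˣ and v3, v4 : ℤ × ℤ → ℂˣ such that, with σ(l,m) = μ3(m)^((−1)^l), for all (l,m): b = λ1(l)·v̄3/v4, c = λ2(l)·v̄4/v3, α = (μ0(m)/σ)·v̂3/v3 and δ = μ0(m)·σ·v̂4/v4. -/
noncomputable def sig (μ3 : ℤ → ℂˣ) (l m : ℤ) : ℂˣ :=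
  μ3 m ^ ((((-1 : ℤˣ) ^ l) : ℤˣ) : ℤ)

/-- multiplicative integral of `f` over `ℤ` -/
noncomputable def pInt (f : ℤ → ℂˣ) : ℤ → ℂˣ
  | Int.ofNat n => ∏ i ∈ Finset.range n, f i
  | Int.negSucc n => (∏ i ∈ Finset.range (n+1), f (Int.negSucc i))⁻¹

lemma pInt_step (f : ℤ → ℂˣ) (m : ℤ) : pInt f (m + 1) = pInt f m * f m := by
  cases m with
  | ofNat n =>
    show pInt f (Int.ofNat (n+1)) = _
    simp [pInt, Finset.prod_range_succ]
  | negSucc n =>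
    cases n with
    | zero =>
      show pInt f (Int.ofNat 0) = _
      simp [pInt]
    | succ k =>
      show pInt f (Int.negSucc k) = _
      simp [pInt, Finset.prod_range_succ]

lemma pInt_zero (f : ℤ → ℂˣ) : pInt f 0 = 1 := by
  show pInt f (Int.ofNat 0) = 1
  simp [pInt]

lemma const_of_step (g : ℤ → ℂˣ) (h : ∀ m, g (m+1) = g m) : ∀ m, g m = g 0 := by
  intro m
  induction m using Int.induction_on with
  | zero => rfl
  | succ n ih => rw [h n, ih]
  | pred n ih =>
    have := h (-(n:ℤ)-1)
    rw [show (-(n:ℤ)-1)+1 = -n by ring] at this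
    rw [← this]
    exact ih

lemma sig_succ (μ3 : ℤ → ℂˣ) (l m : ℤ) : sig μ3 (l+1) m = (sig μ3 l m)⁻¹ := by
  unfold sig
  rw [zpow_add_one (-1 : ℤˣ)]
  push_cast
  rw [mul_neg, mul_one, zpow_neg]

/-- multiplicative integration of the pair `b̂·δ = b·ᾱ`,
`ĉ·α = c·δ̄`. -/
theorem stmt5 (b c α δ : ℤ × ℤ → ℂˣ) :
    (∀ l m : ℤ,
      b (l, m + 1) * δ (l, m) = b (l, m) * α (l + 1, m) ∧
      c (l, m + 1) * α (l, m) = c (l, m) * δ (l + 1, m)) ↔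
    (∃ (μ0 μ3 : ℤ → ℂˣ) (lam1 lam2 : ℤ → ℂˣ) (v3 v4 : ℤ × ℤ → ℂˣ), ∀ l m : ℤ,
      b (l, m) = lam1 l * (v3 (l + 1, m) / v4 (l, m)) ∧
      c (l, m) = lam2 l * (v4 (l + 1, m) / v3 (l, m)) ∧
      α (l, m) = μ0 m / sig μ3 l m * (v3 (l, m + 1) / v3 (l, m)) ∧
      δ (l, m) = μ0 m * sig μ3 l m * (v4 (l, m + 1) / v4 (l, m))) := by
  constructor
  · intro h
    refine ⟨fun _ => 1, fun _ => 1, fun l => b (l, 0), fun l => c (l, 0),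
      fun p => pInt (fun k => α (p.1, k)) p.2,
      fun p => pInt (fun k => δ (p.1, k)) p.2, ?_⟩
    intro l m
    have hsig : sig (fun _ => 1) l m = 1 := by simp [sig]
    have hb : ∀ m : ℤ, b (l, m) * pInt (fun k => δ (l, k)) m /
        pInt (fun k => α (l + 1, k)) m = b (l, 0) := by
      have := const_of_step
        (fun m => b (l, m) * pInt (fun k => δ (l, k)) m / pInt (fun k => α (l + 1, k)) m)
        (by
          intro m
          simp only [pInt_step]
          rw [show b (l, m+1) * (pInt (fun k => δ (l, k)) m * δ (l, m)) =
            (b (l, m+1) * δ (l, m)) * pInt (fun k => δ (l, k)) m by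
              rw [Units.ext_iff]; push_cast; ring,
            (h l m).1]
          rw [div_eq_div_iff_mul_eq_mul, Units.ext_iff]
          push_cast; ring)
      intro m
      simpa [pInt_zero] using this m
    have hc : ∀ m : ℤ, c (l, m) * pInt (fun k => α (l, k)) m /
        pInt (fun k => δ (l + 1, k)) m = c (l, 0) := by
      have := const_of_step
        (fun m => c (l, m) * pInt (fun k => α (l, k)) m / pInt (fun k => δ (l + 1, k)) m)
        (by
          intro m
          simp only [pInt_step]
          rw [show c (l, m+1) * (pInt (fun k => α (l, k)) m * α (l, m)) =
            (c (l, m+1) * α (l, m)) * pInt (fun k => α (l, k)) m by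
              rw [Units.ext_iff]; push_cast; ring,
            (h l m).2]
          rw [div_eq_div_iff_mul_eq_mul, Units.ext_iff]
          push_cast; ring)
      intro m
      simpa [pInt_zero] using this m
    refine ⟨?_, ?_, ?_, ?_⟩
    · show b (l, m) = b (l, 0) * (pInt (fun k => α (l+1, k)) m / pInt (fun k => δ (l, k)) m)
      rw [← hb m, Units.ext_iff]; push_cast; field_simp
    · show c (l, m) = c (l, 0) * (pInt (fun k => δ (l+1, k)) m / pInt (fun k => α (l, k)) m)
      rw [← hc m, Units.ext_iff]; push_cast; field_simp
    · rw [hsig]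
      show α (l, m) = 1 / 1 * (pInt (fun k => α (l, k)) (m+1) / pInt (fun k => α (l, k)) m)
      rw [pInt_step]
      simp
    · rw [hsig]
      show δ (l, m) = 1 * 1 * (pInt (fun k => δ (l, k)) (m+1) / pInt (fun k => δ (l, k)) m)
      rw [pInt_step]
      simp
  · rintro ⟨μ0, μ3, lam1, lam2, v3, v4, h⟩ l m
    obtain ⟨hb1, hc1, hα1, hδ1⟩ := h l m
    obtain ⟨hb2, hc2, hα2, hδ2⟩ := h l (m+1)
    obtain ⟨hb3, hc3, hα3, hδ3⟩ := h (l+1) m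
    constructor
    · rw [hb2, hδ1, hb1, hα3, sig_succ]
      rw [Units.ext_iff]
      push_cast
      field_simp
    · rw [hc2, hα1, hc1, hδ3, sig_succ]
      rw [Units.ext_iff]
      push_cast
      field_simp
end

section
/- Let λ1, λ2, λ3 : ℤ → ℂˣ, μ1, μ2, μ3 : ℤ → ℂˣ, and x, y : ℤ × ℤ → ℂˣ, and set ρ(l,m) = λ3(l)^((−1)^m), σ(l,m) = μ3(m)^((−1)^l). Define lattice terms a = 1/ρ, b = λ1·x̄·y, c = λ2/(x·ȳ), d = ρ, α = x̂/(σ·x), β = μ2, γ = μ1, δ = σ·y/ŷ. Then the six equations (i) â·α + b̂·γ = a·ᾱ + c·β̄, (ii) d̂·δ + ĉ·β = d·δ̄ + b·γ̄, (iii) â·β = d·β̄, (iv) b̂·δ = b·ᾱ, (v) ĉ·α = c·δ̄, (vi) d̂·γ = a·γ̄ hold for all (l,m) ∈ ℤ² if and only if (x,y) satisfies the LSG₂ system for all (l,m): (LSG2-a) (ρ/σ)·(x̂/x) + λ1·μ1·x̂̄·ŷ = (σ/ρ)·(x̂̄/x̄) + λ2·μ2/(x·ȳ) and (LSG2-b)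 (σ/ρ)·(ŷ̄/ŷ) + λ2·μ2/(x̂·y) = (ρ/σ)·(ȳ/y) + λ1·μ1·x̄·ŷ̄. Moreover equations (iii)–(vi) hold identically for these lattice terms. -/
set_option maxHeartbeats 2000000 in
/-- the lattice-term system for the LSG₂ Lax pair reduces to the
LSG₂ evolution equations; the four linear equations hold identically. -/
theorem stmt6 (lam1 lam2 lam3 : ℤ → ℂˣ) (μ1 μ2 μ3 : ℤ → ℂˣ) (x y : ℤ × ℤ → ℂˣ)
    (a b c d α β γ δ : ℤ × ℤ → ℂ)
    (ha : ∀ l m : ℤ, a (l, m) = 1 / (rho lam3 l m : ℂ))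
    (hb : ∀ l m : ℤ, b (l, m) = (lam1 l : ℂ) * x (l + 1, m) * y (l, m))
    (hc : ∀ l m : ℤ, c (l, m) = (lam2 l : ℂ) / (x (l, m) * y (l + 1, m)))
    (hd : ∀ l m : ℤ, d (l, m) = (rho lam3 l m : ℂ))
    (hα : ∀ l m : ℤ, α (l, m) = (x (l, m + 1) : ℂ) / (sig μ3 l m * x (l, m)))
    (hβ : ∀ l m : ℤ, β (l, m) = (μ2 m : ℂ))
    (hγ : ∀ l m : ℤ, γ (l, m) = (μ1 m : ℂ))
    (hδ : ∀ l m : ℤ, δ (l, m) = (sig μ3 l m : ℂ) * y (l, m) / y (l, m + 1)) :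
    ((∀ l m : ℤ,
        a (l, m + 1) * α (l, m) + b (l, m + 1) * γ (l, m) =
          a (l, m) * α (l + 1, m) + c (l, m) * β (l + 1, m) ∧
        d (l, m + 1) * δ (l, m) + c (l, m + 1) * β (l, m) =
          d (l, m) * δ (l + 1, m) + b (l, m) * γ (l + 1, m) ∧
        a (l, m + 1) * β (l, m) = d (l, m) * β (l + 1, m) ∧
        b (l, m + 1) * δ (l, m) = b (l, m) * α (l + 1, m) ∧
        c (l, m + 1) * α (l, m) = c (l, m) * δ (l + 1, m) ∧
        d (l, m + 1) * γ (l, m) = a (l, m) * γ (l + 1, m)) ↔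
      (∀ l m : ℤ,
        (rho lam3 l m : ℂ) / (sig μ3 l m) * (x (l, m + 1) / x (l, m)) +
            (lam1 l : ℂ) * μ1 m * x (l + 1, m + 1) * y (l, m + 1) =
          (sig μ3 l m : ℂ) / (rho lam3 l m) * (x (l + 1, m + 1) / x (l + 1, m)) +
            (lam2 l : ℂ) * μ2 m / (x (l, m) * y (l + 1, m)) ∧
        (sig μ3 l m : ℂ) / (rho lam3 l m) * (y (l + 1, m + 1) / y (l, m + 1)) +
            (lam2 l : ℂ) * μ2 m / (x (l, m + 1) * y (l, m)) =
          (rho lam3 l m : ℂ) / (sig μ3 l m) * (y (l + 1, m) / y (l, m)) +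
            (lam1 l : ℂ) * μ1 m * x (l + 1, m) * y (l + 1, m + 1))) ∧
    (∀ l m : ℤ,
      a (l, m + 1) * β (l, m) = d (l, m) * β (l + 1, m) ∧
      b (l, m + 1) * δ (l, m) = b (l, m) * α (l + 1, m) ∧
      c (l, m + 1) * α (l, m) = c (l, m) * δ (l + 1, m) ∧
      d (l, m + 1) * γ (l, m) = a (l, m) * γ (l + 1, m)) := by
  have hrho : ∀ l m : ℤ, (rho lam3 l (m+1) : ℂ) = (rho lam3 l m : ℂ)⁻¹ := by
    intro l m
    unfold rho
    rw [zpow_add_one, mul_neg_one]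
    push_cast
    rw [zpow_neg]
  have hsig : ∀ l m : ℤ, (sig μ3 (l+1) m : ℂ) = (sig μ3 l m : ℂ)⁻¹ := by
    intro l m
    unfold sig
    rw [zpow_add_one, mul_neg_one]
    push_cast
    rw [zpow_neg]
  have hids : ∀ l m : ℤ,
      a (l, m + 1) * β (l, m) = d (l, m) * β (l + 1, m) ∧
      b (l, m + 1) * δ (l, m) = b (l, m) * α (l + 1, m) ∧
      c (l, m + 1) * α (l, m) = c (l, m) * δ (l + 1, m) ∧
      d (l, m + 1) * γ (l, m) = a (l, m) * γ (l + 1, m) := by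
    intro l m
    simp only [ha, hb, hc, hd, hα, hβ, hγ, hδ, hrho, hsig]
    refine ⟨?_, ?_, ?_, ?_⟩ <;> field_simp <;> ring
  constructor
  · constructor
    · intro h l m
      obtain ⟨e1, e2, -, -, -, -⟩ := h l m
      simp only [ha, hb, hc, hd, hα, hβ, hγ, hδ, hrho, hsig] at e1 e2
      refine ⟨?_, ?_⟩
      · field_simp at e1 ⊢
        linear_combination e1
      · field_simp at e2 ⊢
        apply mul_right_cancel₀ (Units.ne_zero (y (l + 1, m + 1)))
        linear_combination (↑(y (l + 1, m + 1)) : ℂ) * e2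
    · intro h l m
      obtain ⟨e1, e2⟩ := h l m
      obtain ⟨i3, i4, i5, i6⟩ := hids l m
      refine ⟨?_, ?_, i3, i4, i5, i6⟩
      · simp only [ha, hb, hc, hd, hα, hβ, hγ, hδ, hrho, hsig]
        field_simp at e1 ⊢
        linear_combination e1
      · simp only [ha, hb, hc, hd, hα, hβ, hγ, hδ, hrho, hsig]
        field_simp at e2 ⊢
        apply mul_right_cancel₀ (Units.ne_zero (y (l, m)))
        linear_combination (↑(y (l, m)) : ℂ) * e2
  · exact hids
end

section
/- Let λ1, λ2, λ3 : ℤ → ℂˣ, μ1, μ2, μ3 : ℤ → ℂˣ, x : ℤ × ℤ → ℂˣ, and set ρ(l,m) = λ3(l)^((−1)^m), σ(l,m) = μ3(m)^((−1)^l). Then the pair (x, x) satisfies the LSG₂ system for all (l,m), i.e. (LSG2-a) (ρ/σ)·(x̂/x) + λ1·μ1·x̂̄·x̂ = (σ/ρ)·(x̂̄/x̄) + λ2·μ2/(x·x̄) and (LSG2-b) (σ/ρ)·(x̂̄/x̂) + λ2·μ2/(x̂·x) = (ρ/σ)·(x̄/x) + λ1·μ1·x̄·x̂̄, if and only if x satisfies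 the non-autonomous lattice sine-Gordon equation for all (l,m): x̂̄·x·((σ/ρ) − λ1·μ1·x̄·x̂) = (ρ/σ)·x̄·x̂ − λ2·μ2. In particular, with y = x the two equations of the LSG₂ system are equivalent to each other. -/
lemma key1 (a b c d R S L M : ℂ) (ha : a ≠ 0) (hb : b ≠ 0) :
    R * (c / a) + L * d * c = S * (d / b) + M / (a * b) ↔
      d * a * (S - L * b * c) = R * b * c - M := by
  have hab : a * b ≠ 0 := mul_ne_zero ha hb
  rw [show R * (c / a) + L * d * c = (R * c * b + L * d * c * (a * b)) / (a * b) from by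
        field_simp,
      show S * (d / b) + M / (a * b) = (S * d * a + M) / (a * b) from by
        field_simp,
      div_eq_div_iff hab hab]
  constructor <;> intro h
  · have h2 := mul_right_cancel₀ hab h
    linear_combination -h2
  · linear_combination (-(a * b)) * h

lemma key2 (a b c d R S L M : ℂ) (ha : a ≠ 0) (hc : c ≠ 0) :
    S * (d / c) + M / (c * a) = R * (b / a) + L * b * d ↔
      d * a * (S - L * b * c) = R * b * c - M := by
  have hca : c * a ≠ 0 := mul_ne_zero hc ha
  rw [show S * (d / c) + M / (c * a) = (S * d * a + M) / (c * a) from by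
        field_simp,
      show R * (b / a) + L * b * d = (R * b * c + L * b * d * (c * a)) / (c * a) from by
        field_simp,
      div_eq_div_iff hca hca]
  constructor <;> intro h
  · have h2 := mul_right_cancel₀ hca h
    linear_combination h2
  · linear_combination (c * a) * h


/-- with `y = x`, the LSG₂ system is equivalent to the
non-autonomous lattice sine-Gordon equation, and its two equations are
equivalent to each other. -/
theorem stmt10 (lam1 lam2 lam3 : ℤ → ℂˣ) (μ1 μ2 μ3 : ℤ → ℂˣ) (x : ℤ × ℤ → ℂˣ) :
    ((∀ l m : ℤ,
        (rho lam3 l m : ℂ) / (sig μ3 l m) * (x (l, m + 1) / x (l, m)) +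
            (lam1 l : ℂ) * μ1 m * x (l + 1, m + 1) * x (l, m + 1) =
          (sig μ3 l m : ℂ) / (rho lam3 l m) * (x (l + 1, m + 1) / x (l + 1, m)) +
            (lam2 l : ℂ) * μ2 m / (x (l, m) * x (l + 1, m)) ∧
        (sig μ3 l m : ℂ) / (rho lam3 l m) * (x (l + 1, m + 1) / x (l, m + 1)) +
            (lam2 l : ℂ) * μ2 m / (x (l, m + 1) * x (l, m)) =
          (rho lam3 l m : ℂ) / (sig μ3 l m) * (x (l + 1, m) / x (l, m)) +
            (lam1 l : ℂ) * μ1 m * x (l + 1, m) * x (l + 1, m + 1)) ↔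
      (∀ l m : ℤ,
        (x (l + 1, m + 1) : ℂ) * x (l, m) *
            ((sig μ3 l m : ℂ) / (rho lam3 l m) -
              (lam1 l : ℂ) * μ1 m * x (l + 1, m) * x (l, m + 1)) =
          (rho lam3 l m : ℂ) / (sig μ3 l m) * x (l + 1, m) * x (l, m + 1) -
            (lam2 l : ℂ) * μ2 m)) ∧
    ((∀ l m : ℤ,
        (rho lam3 l m : ℂ) / (sig μ3 l m) * (x (l, m + 1) / x (l, m)) +
            (lam1 l : ℂ) * μ1 m * x (l + 1, m + 1) * x (l, m + 1) =
          (sig μ3 l m : ℂ) / (rho lam3 l m) * (x (l + 1, m + 1) / x (l + 1, m)) +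
            (lam2 l : ℂ) * μ2 m / (x (l, m) * x (l + 1, m))) ↔
      (∀ l m : ℤ,
        (sig μ3 l m : ℂ) / (rho lam3 l m) * (x (l + 1, m + 1) / x (l, m + 1)) +
            (lam2 l : ℂ) * μ2 m / (x (l, m + 1) * x (l, m)) =
          (rho lam3 l m : ℂ) / (sig μ3 l m) * (x (l + 1, m) / x (l, m)) +
            (lam1 l : ℂ) * μ1 m * x (l + 1, m) * x (l + 1, m + 1))) := by
  
  have K1 : ∀ l m : ℤ,
      ((rho lam3 l m : ℂ) / (sig μ3 l m) * (x (l, m + 1) / x (l, m)) +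
          (lam1 l : ℂ) * μ1 m * x (l + 1, m + 1) * x (l, m + 1) =
        (sig μ3 l m : ℂ) / (rho lam3 l m) * (x (l + 1, m + 1) / x (l + 1, m)) +
          (lam2 l : ℂ) * μ2 m / (x (l, m) * x (l + 1, m))) ↔
      ((x (l + 1, m + 1) : ℂ) * x (l, m) *
          ((sig μ3 l m : ℂ) / (rho lam3 l m) -
            (lam1 l : ℂ) * μ1 m * x (l + 1, m) * x (l, m + 1)) =
        (rho lam3 l m : ℂ) / (sig μ3 l m) * x (l + 1, m) * x (l, m + 1) -
          (lam2 l : ℂ) * μ2 m) := fun l m =>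
    key1 (x (l, m)) (x (l + 1, m)) (x (l, m + 1)) (x (l + 1, m + 1))
      ((rho lam3 l m : ℂ) / (sig μ3 l m)) ((sig μ3 l m : ℂ) / (rho lam3 l m))
      ((lam1 l : ℂ) * μ1 m) ((lam2 l : ℂ) * μ2 m) (Units.ne_zero _) (Units.ne_zero _)
  have K2 : ∀ l m : ℤ,
      ((sig μ3 l m : ℂ) / (rho lam3 l m) * (x (l + 1, m + 1) / x (l, m + 1)) +
          (lam2 l : ℂ) * μ2 m / (x (l, m + 1) * x (l, m)) =
        (rho lam3 l m : ℂ) / (sig μ3 l m) * (x (l + 1, m) / x (l, m)) +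
          (lam1 l : ℂ) * μ1 m * x (l + 1, m) * x (l + 1, m + 1)) ↔
      ((x (l + 1, m + 1) : ℂ) * x (l, m) *
          ((sig μ3 l m : ℂ) / (rho lam3 l m) -
            (lam1 l : ℂ) * μ1 m * x (l + 1, m) * x (l, m + 1)) =
        (rho lam3 l m : ℂ) / (sig μ3 l m) * x (l + 1, m) * x (l, m + 1) -
          (lam2 l : ℂ) * μ2 m) := fun l m =>
    key2 (x (l, m)) (x (l + 1, m)) (x (l, m + 1)) (x (l + 1, m + 1))
      ((rho lam3 l m : ℂ) / (sig μ3 l m)) ((sig μ3 l m : ℂ) / (rho lam3 l m))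
      ((lam1 l : ℂ) * μ1 m) ((lam2 l : ℂ) * μ2 m) (Units.ne_zero _) (Units.ne_zero _)
  constructor
  · constructor
    · intro h l m
      exact (K1 l m).mp (h l m).1
    · intro h l m
      exact ⟨(K1 l m).mpr (h l m), (K2 l m).mpr (h l m)⟩
  · constructor
    · intro h l m
      exact (K2 l m).mpr ((K1 l m).mp (h l m))
    · intro h l m
      exact (K1 l m).mpr ((K2 l m).mp (h l m))
end

section
/- Let λ1, λ2, λ3 : ℤ → ℂˣ, μ1, μ2, μ3 : ℤ → ℂˣ, x : ℤ × ℤ → ℂˣ, and set ρ(l,m) = λ3(l)^((−1)^m), σ(l,m) = μ3(m)^((−1)^l). Then the pair (x, x) satisfies the LMKdV₂ system for all (l,m), i.e. (LMKdV2-a) (λ1/σ)·(x̂̄/x̂) + (μ2/ρ)·(x/x̂) = λ2·σ·(x/x̄) + ρ·μ1·(x̂̄/x̄) and (LMKdV2-b) ρ·μ1·x̂·x̂̄ + λ2·σ·x·x̂ = (μ2/ρ)·x·x̄ + (λ1/σ)·x̄·x̂̄, if and only if x satisfies the non-autonomous lattice modified KdV equation for all (l,m): x̂̄·((λ1/σ)·x̄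 − ρ·μ1·x̂) = x·(λ2·σ·x̂ − (μ2/ρ)·x̄). In particular, with y = x the two equations of the LMKdV₂ system are equivalent to each other. -/
private lemma keyA (A B C D p q r s : ℂ) (hq : q ≠ 0) (hr : r ≠ 0) :
    (A * (s/r) + B * (p/r) = C * (p/q) + D * (s/q)) ↔
    (s * (A*q - D*r) = p * (C*r - B*q)) := by
  constructor <;> intro h
  · field_simp at h
    linear_combination h
  · field_simp
    linear_combination h

private lemma keyB (A B C D p q r s : ℂ) :
    (D * r * s + C * p * r = B * p * q + A * q * s) ↔
    (s * (A*q - D*r) = p * (C*r - B*q)) := by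
  constructor <;> intro h <;> linear_combination -h

/-- with `y = x`, the LMKdV₂ system is equivalent to the
non-autonomous lattice modified KdV equation, and its two equations are
equivalent to each other. -/
theorem stmt11 (lam1 lam2 lam3 : ℤ → ℂˣ) (μ1 μ2 μ3 : ℤ → ℂˣ) (x : ℤ × ℤ → ℂˣ) :
    ((∀ l m : ℤ,
        (lam1 l : ℂ) / (sig μ3 l m) * (x (l + 1, m + 1) / x (l, m + 1)) +
            (μ2 m : ℂ) / (rho lam3 l m) * (x (l, m) / x (l, m + 1)) =
          (lam2 l : ℂ) * sig μ3 l m * (x (l, m) / x (l + 1, m)) +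
            (rho lam3 l m : ℂ) * μ1 m * (x (l + 1, m + 1) / x (l + 1, m)) ∧
        (rho lam3 l m : ℂ) * μ1 m * x (l, m + 1) * x (l + 1, m + 1) +
            (lam2 l : ℂ) * sig μ3 l m * x (l, m) * x (l, m + 1) =
          (μ2 m : ℂ) / (rho lam3 l m) * x (l, m) * x (l + 1, m) +
            (lam1 l : ℂ) / (sig μ3 l m) * x (l + 1, m) * x (l + 1, m + 1)) ↔
      (∀ l m : ℤ,
        (x (l + 1, m + 1) : ℂ) *
            ((lam1 l : ℂ) / (sig μ3 l m) * x (l + 1, m) -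
              (rho lam3 l m : ℂ) * μ1 m * x (l, m + 1)) =
          (x (l, m) : ℂ) *
            ((lam2 l : ℂ) * sig μ3 l m * x (l, m + 1) -
              (μ2 m : ℂ) / (rho lam3 l m) * x (l + 1, m)))) ∧
    ((∀ l m : ℤ,
        (lam1 l : ℂ) / (sig μ3 l m) * (x (l + 1, m + 1) / x (l, m + 1)) +
            (μ2 m : ℂ) / (rho lam3 l m) * (x (l, m) / x (l, m + 1)) =
          (lam2 l : ℂ) * sig μ3 l m * (x (l, m) / x (l + 1, m)) +
            (rho lam3 l m : ℂ) * μ1 m * (x (l + 1, m + 1) / x (l + 1, m))) ↔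
      (∀ l m : ℤ,
        (rho lam3 l m : ℂ) * μ1 m * x (l, m + 1) * x (l + 1, m + 1) +
            (lam2 l : ℂ) * sig μ3 l m * x (l, m) * x (l, m + 1) =
          (μ2 m : ℂ) / (rho lam3 l m) * x (l, m) * x (l + 1, m) +
            (lam1 l : ℂ) / (sig μ3 l m) * x (l + 1, m) * x (l + 1, m + 1))) := by
  
  refine ⟨⟨fun h l m => (keyA _ _ _ _ _ _ _ _ (Units.ne_zero _) (Units.ne_zero _)).mp (h l m).1,
    fun h l m => ⟨(keyA _ _ _ _ _ _ _ _ (Units.ne_zero _) (Units.ne_zero _)).mpr (h l m),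
      (keyB _ _ _ _ _ _ _ _).mpr (h l m)⟩⟩,
    ⟨fun h l m => (keyB _ _ _ _ _ _ _ _).mpr
      ((keyA _ _ _ _ _ _ _ _ (Units.ne_zero _) (Units.ne_zero _)).mp (h l m)),
    fun h l m => (keyA _ _ _ _ _ _ _ _ (Units.ne_zero _) (Units.ne_zero _)).mpr
      ((keyB _ _ _ _ _ _ _ _).mp (h l m))⟩⟩
end

section
/- Let F1, F2 : ℂ → ℂ be functions such that the pairs {F1, F2}, {F1², F2²} and {F1³, F1²·F2} are each linearly independent over ℂ, and such that there exists n with F1(n) ≠ 0. Let a, b, c, d, α, β, γ, δ : ℤ × ℤ → ℂ and define L(l,m,n) = [[F1(n)·a(l,m), b(l,m)], [F1(n)²·c(l,m), F2(n)·d(l,m)]] and M(l,m,n) = [[F1(n)·α(l,m), β(l,m)], [F1(n)²·γ(l,m), F2(n)·δ(l,m)]]. Then the compatibility condition L(l,m+1,n)·M(l,m,n) = M(l+1,m,n)·L(l,m,n) holds for all (l,m,n) if and only if for all (l,m): (i) â·α + b̂·γ = a·ᾱ + c·β̄, (ii) d̂·δ = d·δ̄, (iii) ĉ·β = b·γ̄,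 (iv) â·β = b·ᾱ, (v) b̂·δ = d·β̄, (vi) ĉ·α = a·γ̄, (vii) d̂·γ = c·δ̄. -/
/-- the single-link Lax pair's compatibility condition is
equivalent to the system (hhlreqns). -/
theorem stmt17 (F1 F2 : ℂ → ℂ)
    (h12 : ∀ c1 c2 : ℂ, (∀ n : ℂ, c1 * F1 n + c2 * F2 n = 0) → c1 = 0 ∧ c2 = 0)
    (hsq : ∀ c1 c2 : ℂ, (∀ n : ℂ, c1 * (F1 n) ^ 2 + c2 * (F2 n) ^ 2 = 0) → c1 = 0 ∧ c2 = 0)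
    (hcu : ∀ c1 c2 : ℂ, (∀ n : ℂ, c1 * (F1 n) ^ 3 + c2 * ((F1 n) ^ 2 * F2 n) = 0) →
      c1 = 0 ∧ c2 = 0)
    (hne : ∃ n : ℂ, F1 n ≠ 0)
    (a b c d α β γ δ : ℤ × ℤ → ℂ)
    (L M : ℤ × ℤ → ℂ → Matrix (Fin 2) (Fin 2) ℂ)
    (hL : ∀ (l m : ℤ) (n : ℂ), L (l, m) n =
      !![F1 n * a (l, m), b (l, m); (F1 n) ^ 2 * c (l, m), F2 n * d (l, m)])
    (hM : ∀ (l m : ℤ) (n : ℂ), M (l, m) n =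
      !![F1 n * α (l, m), β (l, m); (F1 n) ^ 2 * γ (l, m), F2 n * δ (l, m)]) :
    (∀ (l m : ℤ) (n : ℂ), L (l, m + 1) n * M (l, m) n = M (l + 1, m) n * L (l, m) n) ↔
    (∀ l m : ℤ,
      a (l, m + 1) * α (l, m) + b (l, m + 1) * γ (l, m) =
        a (l, m) * α (l + 1, m) + c (l, m) * β (l + 1, m) ∧
      d (l, m + 1) * δ (l, m) = d (l, m) * δ (l + 1, m) ∧
      c (l, m + 1) * β (l, m) = b (l, m) * γ (l + 1, m) ∧
      a (l, m + 1) * β (l, m) = b (l, m) * α (l + 1, m) ∧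
      b (l, m + 1) * δ (l, m) = d (l, m) * β (l + 1, m) ∧
      c (l, m + 1) * α (l, m) = a (l, m) * γ (l + 1, m) ∧
      d (l, m + 1) * γ (l, m) = c (l, m) * δ (l + 1, m)) := by
  constructor
  · intro h l m
    have key : ∀ (n : ℂ) (i j : Fin 2),
        (!![F1 n * a (l, m + 1), b (l, m + 1);
            (F1 n) ^ 2 * c (l, m + 1), F2 n * d (l, m + 1)] *
         !![F1 n * α (l, m), β (l, m);
            (F1 n) ^ 2 * γ (l, m), F2 n * δ (l, m)]) i j =
        (!![F1 n * α (l + 1, m), β (l + 1, m);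
            (F1 n) ^ 2 * γ (l + 1, m), F2 n * δ (l + 1, m)] *
         !![F1 n * a (l, m), b (l, m);
            (F1 n) ^ 2 * c (l, m), F2 n * d (l, m)]) i j := by
      intro n i j
      have := h l m n
      rw [hL, hM, hL, hM] at this
      rw [this]
    have e00 : ∀ n : ℂ, (F1 n) ^ 2 *
        (a (l, m + 1) * α (l, m) + b (l, m + 1) * γ (l, m)
          - (a (l, m) * α (l + 1, m) + c (l, m) * β (l + 1, m))) = 0 := by
      intro n
      have := key n 0 0
      simp [Matrix.mul_fin_two] at this
      linear_combination this
    have e01 : ∀ n : ℂ,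
        (a (l, m + 1) * β (l, m) - b (l, m) * α (l + 1, m)) * F1 n +
        (b (l, m + 1) * δ (l, m) - d (l, m) * β (l + 1, m)) * F2 n = 0 := by
      intro n
      have := key n 0 1
      simp [Matrix.mul_fin_two] at this
      linear_combination this
    have e10 : ∀ n : ℂ,
        (c (l, m + 1) * α (l, m) - a (l, m) * γ (l + 1, m)) * (F1 n) ^ 3 +
        (d (l, m + 1) * γ (l, m) - c (l, m) * δ (l + 1, m)) * ((F1 n) ^ 2 * F2 n) = 0 := by
      intro n
      have := key n 1 0
      simp [Matrix.mul_fin_two] at this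
      linear_combination this
    have e11 : ∀ n : ℂ,
        (c (l, m + 1) * β (l, m) - b (l, m) * γ (l + 1, m)) * (F1 n) ^ 2 +
        (d (l, m + 1) * δ (l, m) - d (l, m) * δ (l + 1, m)) * (F2 n) ^ 2 = 0 := by
      intro n
      have := key n 1 1
      simp [Matrix.mul_fin_two] at this
      linear_combination this
    obtain ⟨n0, hn0⟩ := hne
    have h1 : a (l, m + 1) * α (l, m) + b (l, m + 1) * γ (l, m) =
        a (l, m) * α (l + 1, m) + c (l, m) * β (l + 1, m) := by
      have h2 : (F1 n0) ^ 2 ≠ 0 := pow_ne_zero _ hn0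
      rcases mul_eq_zero.mp (e00 n0) with h | h
      · exact absurd h h2
      · linear_combination h
    obtain ⟨h4, h5⟩ := h12 _ _ e01
    obtain ⟨h6, h7⟩ := hcu _ _ e10
    obtain ⟨h3, h2⟩ := hsq _ _ e11
    exact ⟨h1, by linear_combination h2, by linear_combination h3,
      by linear_combination h4, by linear_combination h5,
      by linear_combination h6, by linear_combination h7⟩

  · intro h l m n
    obtain ⟨h1, h2, h3, h4, h5, h6, h7⟩ := h l m
    rw [hL, hM, hL, hM, Matrix.mul_fin_two, Matrix.mul_fin_two]
    ext i j
    fin_cases i <;> fin_cases j <;> simp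
    · linear_combination (F1 n) ^ 2 * h1
    · linear_combination F1 n * h4 + F2 n * h5
    · linear_combination (F1 n) ^ 3 * h6 + (F1 n) ^ 2 * F2 n * h7
    · linear_combination (F1 n) ^ 2 * h3 + (F2 n) ^ 2 * h2
end
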